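/- For an integer matrix G in the group 𝔾 = {G ∈ Sp(4g₀,ℤ) of the form [[A,B,C,D],[B,A,−D,−C],[E,F,G',H],[−F,−E,H,G']]}, the matrix P(G) = [[A+B, C−D],[E+F, G'−H]] belongs to 𝕂 = {g ∈ GL(2g₀,ℤ) : gᵀJg ≡ J mod 2}. Conversely, for every g ∈ 𝕂 the matrix P⁻¹(g) has integer entries, so P restricts to a group isomorphism 𝔾 ≅ 𝕂. -/

import Mathlib

/-!
Conjugation by the integer matrix `T = blockDiagonalizer`, which satisfies `T Tᵀ = 2`, turns every
`G ∈ 𝒱` into `diag(u, v)` with `u = gg1 G`, `v = gg2 G`; over `ℤ` the pairs that occur are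
exactly those with `u ≡ v` mod 2. As `Tᵀ J T = 2 [[0, J], [J, 0]]`, `G` is symplectic iff
`uᵀ J v = J`. So `v` is determined by `u` (injectivity), `v = u + 2N` gives
`uᵀ J u = J - 2 uᵀ J N` (the image lies in 𝕂), and if `gᵀ J g = J + 2M` then
`v = g + 2 J (gᵀ)⁻¹ M` is a partner of `g` (surjectivity). Multiplicativity holds because
`gg1 X` is a block of `X T`.
-/

open Matrix

/-- The space 𝒱 of 4g₀×4g₀ matrices of the block form
[[α,β,γ,δ],[β,α,−δ,−γ],[π,ρ,ξ,η],[−ρ,−π,η,ξ]]. -/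
def Vspace (g₀ : ℕ) (R : Type*) [Ring R] :
    Set (Matrix ((Fin g₀ ⊕ Fin g₀) ⊕ (Fin g₀ ⊕ Fin g₀))
      ((Fin g₀ ⊕ Fin g₀) ⊕ (Fin g₀ ⊕ Fin g₀)) R) :=
  {S | ∃ a b c d p r x e : Matrix (Fin g₀) (Fin g₀) R,
    S = Matrix.fromBlocks (Matrix.fromBlocks a b b a) (Matrix.fromBlocks c d (-d) (-c))
      (Matrix.fromBlocks p r (-r) (-p)) (Matrix.fromBlocks x e e x)}

/-- First component of the map G: [[α+β, γ−δ],[π+ρ, ξ−η]]. -/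
def gg1 {g₀ : ℕ} {R : Type*} [Ring R]
    (S : Matrix ((Fin g₀ ⊕ Fin g₀) ⊕ (Fin g₀ ⊕ Fin g₀))
      ((Fin g₀ ⊕ Fin g₀) ⊕ (Fin g₀ ⊕ Fin g₀)) R) :
    Matrix (Fin g₀ ⊕ Fin g₀) (Fin g₀ ⊕ Fin g₀) R :=
  Matrix.fromBlocks
    (S.submatrix (Sum.inl ∘ Sum.inl) (Sum.inl ∘ Sum.inl) +
      S.submatrix (Sum.inl ∘ Sum.inl) (Sum.inl ∘ Sum.inr))
    (S.submatrix (Sum.inl ∘ Sum.inl) (Sum.inr ∘ Sum.inl) -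
      S.submatrix (Sum.inl ∘ Sum.inl) (Sum.inr ∘ Sum.inr))
    (S.submatrix (Sum.inr ∘ Sum.inl) (Sum.inl ∘ Sum.inl) +
      S.submatrix (Sum.inr ∘ Sum.inl) (Sum.inl ∘ Sum.inr))
    (S.submatrix (Sum.inr ∘ Sum.inl) (Sum.inr ∘ Sum.inl) -
      S.submatrix (Sum.inr ∘ Sum.inl) (Sum.inr ∘ Sum.inr))

/-- Second component of the map G: [[α−β, γ+δ],[π−ρ, ξ+η]]. -/
def gg2 {g₀ : ℕ} {R : Type*} [Ring R]
    (S : Matrix ((Fin g₀ ⊕ Fin g₀) ⊕ (Fin g₀ ⊕ Fin g₀))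
      ((Fin g₀ ⊕ Fin g₀) ⊕ (Fin g₀ ⊕ Fin g₀)) R) :
    Matrix (Fin g₀ ⊕ Fin g₀) (Fin g₀ ⊕ Fin g₀) R :=
  Matrix.fromBlocks
    (S.submatrix (Sum.inl ∘ Sum.inl) (Sum.inl ∘ Sum.inl) -
      S.submatrix (Sum.inl ∘ Sum.inl) (Sum.inl ∘ Sum.inr))
    (S.submatrix (Sum.inl ∘ Sum.inl) (Sum.inr ∘ Sum.inl) +
      S.submatrix (Sum.inl ∘ Sum.inl) (Sum.inr ∘ Sum.inr))
    (S.submatrix (Sum.inr ∘ Sum.inl) (Sum.inl ∘ Sum.inl) -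
      S.submatrix (Sum.inr ∘ Sum.inl) (Sum.inl ∘ Sum.inr))
    (S.submatrix (Sum.inr ∘ Sum.inl) (Sum.inr ∘ Sum.inl) +
      S.submatrix (Sum.inr ∘ Sum.inl) (Sum.inr ∘ Sum.inr))

/-- The standard symplectic matrix J = [[0,Id],[−Id,0]]. -/
def Jstd (n : Type*) (R : Type*) [Ring R] [DecidableEq n] [Fintype n] :
    Matrix (n ⊕ n) (n ⊕ n) R :=
  Matrix.fromBlocks 0 1 (-1) 0

section Jstd

variable {n R : Type*} [Fintype n] [DecidableEq n] [CommRing R]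
  {A B B' g M N : Matrix (n ⊕ n) (n ⊕ n) R}

theorem Jstd_mul_Jstd : Jstd n R * Jstd n R = -1 := by
  simp [Jstd, fromBlocks_multiply, ← fromBlocks_one, fromBlocks_neg]

theorem transpose_Jstd : (Jstd n R)ᵀ = -Jstd n R := by
  simp [Jstd, fromBlocks_transpose, fromBlocks_neg]

theorem isUnit_det_Jstd : IsUnit (Jstd n R).det :=
  isUnit_det_of_right_inverse (B := -Jstd n R) <| by rw [Matrix.mul_neg, Jstd_mul_Jstd, neg_neg]

theorem transpose_mul_Jstd_mul_symm (h : Aᵀ * Jstd n R * B = Jstd n R) :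
    Bᵀ * Jstd n R * A = Jstd n R := by
  have := congrArg (-transpose ·) h
  simpa [Matrix.mul_assoc, transpose_Jstd] using this

theorem isUnit_det_of_transpose_mul_Jstd_mul_eq (h : Aᵀ * Jstd n R * B = Jstd n R) :
    IsUnit A.det := by
  have hdet := congrArg det h
  rw [det_mul, det_mul, det_transpose, mul_assoc] at hdet
  exact isUnit_of_mul_isUnit_left (hdet ▸ isUnit_det_Jstd)

theorem eq_of_transpose_mul_Jstd_mul_eq (h : Aᵀ * Jstd n R * B = Jstd n R)
    (h' : Aᵀ * Jstd n R * B' = Jstd n R) : B = B' := by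
  have hA : IsUnit (Aᵀ * Jstd n R) := by
    rw [isUnit_iff_isUnit_det, det_mul, det_transpose]
    exact (isUnit_det_of_transpose_mul_Jstd_mul_eq h).mul isUnit_det_Jstd
  exact hA.mul_left_cancel (by rw [h, h'])

theorem transpose_mul_Jstd_mul_self_eq_add_two_smul
    (h : Aᵀ * Jstd n R * (A + (2 : R) • N) = Jstd n R) :
    Aᵀ * Jstd n R * A = Jstd n R + (2 : R) • -(Aᵀ * Jstd n R * N) := by
  rw [Matrix.mul_add, Matrix.mul_smul] at h
  linear_combination (norm := module) h

theorem transpose_mul_Jstd_mul_add_two_smul (hg : IsUnit g.det)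
    (hM : gᵀ * Jstd n R * g = Jstd n R + (2 : R) • M) :
    gᵀ * Jstd n R * (g + (2 : R) • (Jstd n R * gᵀ⁻¹ * M)) = Jstd n R := by
  have hcancel : gᵀ * Jstd n R * (Jstd n R * gᵀ⁻¹ * M) = -M := by
    rw [show gᵀ * Jstd n R * (Jstd n R * gᵀ⁻¹ * M) =
        gᵀ * (Jstd n R * Jstd n R) * gᵀ⁻¹ * M by simp only [Matrix.mul_assoc], Jstd_mul_Jstd]
    simp only [Matrix.mul_neg, Matrix.mul_one, Matrix.neg_mul,
      mul_nonsing_inv _ (show IsUnit gᵀ.det by rwa [det_transpose]), Matrix.one_mul]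
  rw [Matrix.mul_add, Matrix.mul_smul, hM, hcancel]
  module

end Jstd

section BlockDiagonalizer

variable (n R : Type*) [Fintype n] [DecidableEq n] [CommRing R]

def blockDiagonalizer : Matrix ((n ⊕ n) ⊕ (n ⊕ n)) ((n ⊕ n) ⊕ (n ⊕ n)) R :=
  fromBlocks (fromBlocks 1 0 1 0) (fromBlocks 1 0 (-1) 0)
    (fromBlocks 0 1 0 (-1)) (fromBlocks 0 1 0 1)

theorem blockDiagonalizer_mul_transpose :
    blockDiagonalizer n R * (blockDiagonalizer n R)ᵀ = (2 : R) • 1 := by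
  simp [blockDiagonalizer, fromBlocks_transpose, fromBlocks_multiply, ← fromBlocks_one,
    fromBlocks_add, two_smul]

theorem transpose_blockDiagonalizer_mul_Jstd_mul :
    (blockDiagonalizer n R)ᵀ * Jstd (n ⊕ n) R * blockDiagonalizer n R =
      (2 : R) • fromBlocks 0 (Jstd n R) (Jstd n R) 0 := by
  simp [blockDiagonalizer, Jstd, fromBlocks_transpose, fromBlocks_multiply,
    ← fromBlocks_zero, ← fromBlocks_one, fromBlocks_neg, fromBlocks_add, two_smul]

end BlockDiagonalizer

theorem Matrix.submatrix_mul_fromBlocks_zero_inl {k l m n o p R : Type*} [Fintype m] [Fintype n]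
    [NonUnitalNonAssocSemiring R] (A : Matrix l (m ⊕ n) R) (u : Matrix m o R) (v : Matrix n p R)
    (f : k → l) : (A * fromBlocks u 0 0 v).submatrix f Sum.inl = A.submatrix f Sum.inl * u := by
  ext
  simp [mul_apply, Fintype.sum_sum_type]

section Vspace

variable {g₀ : ℕ} {R : Type*} [CommRing R]
  {G H : Matrix ((Fin g₀ ⊕ Fin g₀) ⊕ (Fin g₀ ⊕ Fin g₀))
    ((Fin g₀ ⊕ Fin g₀) ⊕ (Fin g₀ ⊕ Fin g₀)) R}

theorem gg1_fromBlocks (a b c d p r x e : Matrix (Fin g₀) (Fin g₀) R) :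
    gg1 (fromBlocks (fromBlocks a b b a) (fromBlocks c d (-d) (-c))
      (fromBlocks p r (-r) (-p)) (fromBlocks x e e x)) =
      fromBlocks (a + b) (c - d) (p + r) (x - e) := by
  simp only [gg1, fromBlocks_inj]
  refine ⟨?_, ?_, ?_, ?_⟩ <;> ext <;> simp [sub_eq_add_neg]

theorem gg2_fromBlocks (a b c d p r x e : Matrix (Fin g₀) (Fin g₀) R) :
    gg2 (fromBlocks (fromBlocks a b b a) (fromBlocks c d (-d) (-c))
      (fromBlocks p r (-r) (-p)) (fromBlocks x e e x)) =
      fromBlocks (a - b) (c + d) (p - r) (x + e) := by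
  simp only [gg2, fromBlocks_inj]
  refine ⟨?_, ?_, ?_, ?_⟩ <;> ext <;> simp [sub_eq_add_neg]

theorem exists_gg2_eq_gg1_add_two_smul (hG : G ∈ Vspace g₀ R) :
    ∃ N, gg2 G = gg1 G + (2 : R) • N := by
  obtain ⟨a, b, c, d, p, r, x, e, rfl⟩ := hG
  refine ⟨fromBlocks (-b) d (-r) e, ?_⟩
  rw [gg1_fromBlocks, gg2_fromBlocks, fromBlocks_smul, fromBlocks_add, fromBlocks_inj]
  refine ⟨?_, ?_, ?_, ?_⟩ <;> module

theorem exists_mem_Vspace_gg1_eq_gg2_eq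
    (u N : Matrix (Fin g₀ ⊕ Fin g₀) (Fin g₀ ⊕ Fin g₀) R) :
    ∃ G ∈ Vspace g₀ R, gg1 G = u ∧ gg2 G = u + (2 : R) • N := by
  refine ⟨fromBlocks
    (fromBlocks (u.toBlocks₁₁ + N.toBlocks₁₁) (-N.toBlocks₁₁) (-N.toBlocks₁₁)
      (u.toBlocks₁₁ + N.toBlocks₁₁))
    (fromBlocks (u.toBlocks₁₂ + N.toBlocks₁₂) N.toBlocks₁₂ (-N.toBlocks₁₂)
      (-(u.toBlocks₁₂ + N.toBlocks₁₂)))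
    (fromBlocks (u.toBlocks₂₁ + N.toBlocks₂₁) (-N.toBlocks₂₁) (-(-N.toBlocks₂₁))
      (-(u.toBlocks₂₁ + N.toBlocks₂₁)))
    (fromBlocks (u.toBlocks₂₂ + N.toBlocks₂₂) N.toBlocks₂₂ N.toBlocks₂₂
      (u.toBlocks₂₂ + N.toBlocks₂₂)),
    ⟨_, _, _, _, _, _, _, _, rfl⟩, ?_, ?_⟩
  · rw [gg1_fromBlocks]
    conv_rhs => rw [← fromBlocks_toBlocks u]
    rw [fromBlocks_inj]
    refine ⟨?_, ?_, ?_, ?_⟩ <;> module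
  · rw [gg2_fromBlocks]
    conv_rhs => rw [← fromBlocks_toBlocks u, ← fromBlocks_toBlocks N]
    rw [fromBlocks_smul, fromBlocks_add, fromBlocks_inj]
    refine ⟨?_, ?_, ?_, ?_⟩ <;> module

theorem mul_blockDiagonalizer (hG : G ∈ Vspace g₀ R) :
    G * blockDiagonalizer (Fin g₀) R =
      blockDiagonalizer (Fin g₀) R * fromBlocks (gg1 G) 0 0 (gg2 G) := by
  obtain ⟨a, b, c, d, p, r, x, e, rfl⟩ := hG
  rw [gg1_fromBlocks, gg2_fromBlocks]
  simp only [blockDiagonalizer, fromBlocks_multiply, fromBlocks_add, Matrix.mul_one,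
    Matrix.mul_zero, Matrix.zero_mul, Matrix.one_mul, Matrix.mul_neg, Matrix.neg_mul, add_zero,
    zero_add]
  refine fromBlocks_inj.mpr ⟨?_, ?_, ?_, ?_⟩ <;>
    refine fromBlocks_inj.mpr ⟨?_, ?_, ?_, ?_⟩ <;> abel

theorem gg1_eq_submatrix_mul_blockDiagonalizer
    (X : Matrix ((Fin g₀ ⊕ Fin g₀) ⊕ (Fin g₀ ⊕ Fin g₀))
      ((Fin g₀ ⊕ Fin g₀) ⊕ (Fin g₀ ⊕ Fin g₀)) R) :
    gg1 X = (X * blockDiagonalizer (Fin g₀) R).submatrix (Sum.map Sum.inl Sum.inl) Sum.inl := by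
  ext (i | i) (j | j) <;>
    simp [gg1, blockDiagonalizer, mul_apply, Fintype.sum_sum_type, one_apply, sub_eq_add_neg]

theorem gg1_mul (hH : H ∈ Vspace g₀ R) : gg1 (G * H) = gg1 G * gg1 H := by
  rw [gg1_eq_submatrix_mul_blockDiagonalizer, Matrix.mul_assoc, mul_blockDiagonalizer hH,
    ← Matrix.mul_assoc, submatrix_mul_fromBlocks_zero_inl,
    ← gg1_eq_submatrix_mul_blockDiagonalizer]

end Vspace

section VspaceSymplectic

variable {g₀ : ℕ} {R : Type*} [CommRing R] [IsDomain R] [NeZero (2 : R)]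
  {G H X Y : Matrix ((Fin g₀ ⊕ Fin g₀) ⊕ (Fin g₀ ⊕ Fin g₀))
    ((Fin g₀ ⊕ Fin g₀) ⊕ (Fin g₀ ⊕ Fin g₀)) R}

theorem eq_of_gg1_eq_of_gg2_eq (hG : G ∈ Vspace g₀ R) (hH : H ∈ Vspace g₀ R)
    (h₁ : gg1 G = gg1 H) (h₂ : gg2 G = gg2 H) : G = H := by
  have h := congrArg (· * (blockDiagonalizer (Fin g₀) R)ᵀ) <|
    show G * blockDiagonalizer (Fin g₀) R = H * blockDiagonalizer (Fin g₀) R by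
      rw [mul_blockDiagonalizer hG, mul_blockDiagonalizer hH, h₁, h₂]
  simp only [Matrix.mul_assoc, blockDiagonalizer_mul_transpose, Matrix.mul_smul,
    Matrix.mul_one] at h
  exact smul_right_injective _ two_ne_zero h

theorem eq_of_transpose_blockDiagonalizer_mul_mul_eq
    (h : (blockDiagonalizer (Fin g₀) R)ᵀ * X * blockDiagonalizer (Fin g₀) R =
      (blockDiagonalizer (Fin g₀) R)ᵀ * Y * blockDiagonalizer (Fin g₀) R) : X = Y := by
  set T := blockDiagonalizer (Fin g₀) R
  have hconj (Z) : T * (Tᵀ * Z * T) * Tᵀ = (2 : R) • (2 : R) • Z := by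
    rw [show T * (Tᵀ * Z * T) * Tᵀ = T * Tᵀ * Z * (T * Tᵀ) by simp only [Matrix.mul_assoc],
      blockDiagonalizer_mul_transpose, Matrix.smul_mul, Matrix.one_mul, Matrix.mul_smul,
      Matrix.mul_one]
  have h' := congrArg (T * · * Tᵀ) h
  simp only [hconj] at h'
  exact smul_right_injective _ two_ne_zero (smul_right_injective _ two_ne_zero h')

/-- Conjugated by `blockDiagonalizer`, the symplectic condition on `G` becomes the pair of
equations `uᵀ J v = J`, `vᵀ J u = J` for `u = gg1 G`, `v = gg2 G`; the second is the transpose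
of the first. -/
theorem transpose_mul_Jstd_mul_eq_Jstd_iff (hG : G ∈ Vspace g₀ R) :
    Gᵀ * Jstd (Fin g₀ ⊕ Fin g₀) R * G = Jstd (Fin g₀ ⊕ Fin g₀) R ↔
      (gg1 G)ᵀ * Jstd (Fin g₀) R * gg2 G = Jstd (Fin g₀) R := by
  set T := blockDiagonalizer (Fin g₀) R
  set D := fromBlocks (gg1 G) 0 0 (gg2 G)
  have hconj : Tᵀ * (Gᵀ * Jstd (Fin g₀ ⊕ Fin g₀) R * G) * T = (2 : R) • fromBlocks 0
      ((gg1 G)ᵀ * Jstd (Fin g₀) R * gg2 G) ((gg2 G)ᵀ * Jstd (Fin g₀) R * gg1 G) 0 := by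
    have hGT : G * T = T * D := mul_blockDiagonalizer hG
    have hTG : Tᵀ * Gᵀ = Dᵀ * Tᵀ := by rw [← transpose_mul, hGT, transpose_mul]
    calc Tᵀ * (Gᵀ * Jstd (Fin g₀ ⊕ Fin g₀) R * G) * T
        = Tᵀ * Gᵀ * Jstd (Fin g₀ ⊕ Fin g₀) R * (G * T) := by simp only [Matrix.mul_assoc]
      _ = Dᵀ * (Tᵀ * Jstd (Fin g₀ ⊕ Fin g₀) R * T) * D := by
        rw [hTG, hGT]; simp only [Matrix.mul_assoc]
      _ = _ := by
        rw [transpose_blockDiagonalizer_mul_Jstd_mul]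
        simp [D, fromBlocks_transpose, fromBlocks_multiply, Matrix.mul_assoc]
  constructor
  · intro h
    rw [h, transpose_blockDiagonalizer_mul_Jstd_mul] at hconj
    exact (fromBlocks_inj.mp (smul_right_injective _ two_ne_zero hconj)).2.1.symm
  · intro h
    apply eq_of_transpose_blockDiagonalizer_mul_mul_eq
    rw [hconj, h, transpose_mul_Jstd_mul_symm h, transpose_blockDiagonalizer_mul_Jstd_mul]

end VspaceSymplectic

theorem stmt15 (g₀ : ℕ) :
    Set.BijOn gg1
      {G ∈ Vspace g₀ ℤ |
        Gᵀ * Jstd (Fin g₀ ⊕ Fin g₀) ℤ * G = Jstd (Fin g₀ ⊕ Fin g₀) ℤ}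
      {g : Matrix (Fin g₀ ⊕ Fin g₀) (Fin g₀ ⊕ Fin g₀) ℤ |
        IsUnit g.det ∧
        ∃ M : Matrix (Fin g₀ ⊕ Fin g₀) (Fin g₀ ⊕ Fin g₀) ℤ,
          gᵀ * Jstd (Fin g₀) ℤ * g = Jstd (Fin g₀) ℤ + (2 : ℤ) • M} ∧
    ∀ G ∈ {G ∈ Vspace g₀ ℤ |
        Gᵀ * Jstd (Fin g₀ ⊕ Fin g₀) ℤ * G = Jstd (Fin g₀ ⊕ Fin g₀) ℤ},
      ∀ H ∈ {G ∈ Vspace g₀ ℤ |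
        Gᵀ * Jstd (Fin g₀ ⊕ Fin g₀) ℤ * G = Jstd (Fin g₀ ⊕ Fin g₀) ℤ},
        gg1 (G * H) = gg1 G * gg1 H := by
  refine ⟨⟨?mapsTo, ?injOn, ?surjOn⟩, fun G _ H ⟨hH, _⟩ => gg1_mul hH⟩
  case mapsTo =>
    rintro G ⟨hG, hsymp⟩
    rw [transpose_mul_Jstd_mul_eq_Jstd_iff hG] at hsymp
    obtain ⟨N, hN⟩ := exists_gg2_eq_gg1_add_two_smul hG
    rw [hN] at hsymp
    exact ⟨isUnit_det_of_transpose_mul_Jstd_mul_eq hsymp, _,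
      transpose_mul_Jstd_mul_self_eq_add_two_smul hsymp⟩
  case injOn =>
    rintro G ⟨hG, hsympG⟩ H ⟨hH, hsympH⟩ h₁
    rw [transpose_mul_Jstd_mul_eq_Jstd_iff hG] at hsympG
    rw [transpose_mul_Jstd_mul_eq_Jstd_iff hH, ← h₁] at hsympH
    exact eq_of_gg1_eq_of_gg2_eq hG hH h₁ (eq_of_transpose_mul_Jstd_mul_eq hsympG hsympH)
  case surjOn =>
    rintro g ⟨hdet, M, hM⟩
    obtain ⟨G, hG, hG₁, hG₂⟩ :=
      exists_mem_Vspace_gg1_eq_gg2_eq g (Jstd (Fin g₀) ℤ * gᵀ⁻¹ * M)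
    refine ⟨G, ⟨hG, ?_⟩, hG₁⟩
    rw [transpose_mul_Jstd_mul_eq_Jstd_iff hG, hG₁, hG₂]
    exact transpose_mul_Jstd_mul_add_two_smul hdet hM
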